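/- arXiv:1503.02991 — 3 statements merged into one kernel-verified Lean document; each statement's English description precedes it below -/
import Mathlib

section
/- If f : ℝ → ℂ is 1-periodic, smooth, then for every real h, the integral over I = [-1/2,1/2] of |f(x+h) - f(x)| dx is bounded by C · Var(f, I) · |sin(πh)| for some absolute constant C, where Var(f, I) = ∫_I |f'(x)| dx. -/
open Real MeasureTheory

private theorem aux_translation_bound (f : ℝ → ℂ) (hf : ContDiff ℝ (⊤ : ℕ∞) f)
    (hper : Function.Periodic f 1) (c : ℝ) (hc : 0 ≤ c) :
    (∫ x in (-(1:ℝ)/2)..(1/2), ‖f (x + c) - f x‖) ≤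
      c * (∫ x in (-(1:ℝ)/2)..(1/2), ‖deriv f x‖) := by
  set g : ℝ → ℝ := fun x => ‖deriv f x‖ with hgdef
  have hderc : Continuous (deriv f) := hf.continuous_deriv (by simp)
  have hg_cont : Continuous g := hderc.norm
  have hg_per : Function.Periodic g 1 := by
    intro x
    have hfun : (fun y => f (y + 1)) = f := funext fun y => hper y
    have : deriv f (x + 1) = deriv f x := by
      rw [← deriv_comp_add_const (f := f) (a := 1) (x := x), hfun]
    simp only [hgdef, this]
  -- pointwise bound
  have hpt : ∀ x : ℝ, ‖f (x + c) - f x‖ ≤ ∫ s in (0:ℝ)..c, g (x + s) := by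
    intro x
    have hderiv : ∀ t ∈ Set.uIcc x (x + c), DifferentiableAt ℝ f t :=
      fun t _ => (hf.differentiable (by simp)).differentiableAt
    have hint : IntervalIntegrable (deriv f) volume x (x + c) :=
      hderc.intervalIntegrable _ _
    have heq : f (x + c) - f x = ∫ t in x..(x + c), deriv f t :=
      (intervalIntegral.integral_deriv_eq_sub hderiv hint).symm
    rw [heq]
    calc ‖∫ t in x..(x + c), deriv f t‖ ≤ ∫ t in x..(x + c), ‖deriv f t‖ :=
          intervalIntegral.norm_integral_le_integral_norm (by linarith)
      _ = ∫ s in (0:ℝ)..c, g (x + s) := by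
          rw [intervalIntegral.integral_comp_add_left g x]
          simp [hgdef]
  -- continuity of the majorant
  have hRHScont : Continuous (fun x => ∫ s in (0:ℝ)..c, g (x + s)) := by
    have hGc : Continuous (fun y => ∫ t in (0:ℝ)..y, g t) :=
      intervalIntegral.continuous_primitive (fun a b => hg_cont.intervalIntegrable a b) 0
    have hfun : (fun x => ∫ s in (0:ℝ)..c, g (x + s)) =
        fun x => (∫ t in (0:ℝ)..(x + c), g t) - ∫ t in (0:ℝ)..x, g t := by
      funext x
      rw [intervalIntegral.integral_comp_add_left g x,
        intervalIntegral.integral_interval_sub_left (hg_cont.intervalIntegrable _ _)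
          (hg_cont.intervalIntegrable _ _)]
      norm_num
    rw [hfun]
    exact (hGc.comp (continuous_id.add continuous_const)).sub hGc
  have hLHScont : Continuous (fun x => ‖f (x + c) - f x‖) :=
    ((hf.continuous.comp (continuous_id.add continuous_const)).sub hf.continuous).norm
  -- Fubini
  have hswap : (∫ x in (-(1:ℝ)/2)..(1/2), ∫ s in (0:ℝ)..c, g (x + s)) =
      ∫ s in (0:ℝ)..c, ∫ x in (-(1:ℝ)/2)..(1/2), g (x + s) := by
    have hab : (-(1:ℝ)/2) ≤ 1/2 := by norm_num
    rw [intervalIntegral.integral_of_le hab, intervalIntegral.integral_of_le hc]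
    simp_rw [intervalIntegral.integral_of_le hc, intervalIntegral.integral_of_le hab]
    have hcontF : Continuous (Function.uncurry fun x s => g (x + s)) :=
      hg_cont.comp (continuous_fst.add continuous_snd)
    have hIcc : IntegrableOn (Function.uncurry fun x s => g (x + s))
        (Set.Icc (-(1:ℝ)/2) (1/2) ×ˢ Set.Icc 0 c) (volume.prod volume) := by
      rw [← Measure.volume_eq_prod]
      exact hcontF.continuousOn.integrableOn_compact (isCompact_Icc.prod isCompact_Icc)
    have hIoc : IntegrableOn (Function.uncurry fun x s => g (x + s))
        (Set.Ioc (-(1:ℝ)/2) (1/2) ×ˢ Set.Ioc 0 c) (volume.prod volume) :=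
      hIcc.mono_set (Set.prod_mono Set.Ioc_subset_Icc_self Set.Ioc_subset_Icc_self)
    refine integral_integral_swap ?_
    rw [Measure.prod_restrict]
    exact hIoc
  -- inner integral is the variation, by periodicity
  have hinner : ∀ s : ℝ, (∫ x in (-(1:ℝ)/2)..(1/2), g (x + s)) =
      ∫ x in (-(1:ℝ)/2)..(1/2), g x := by
    intro s
    rw [intervalIntegral.integral_comp_add_right g s]
    have e1 : (1:ℝ)/2 + s = (-(1:ℝ)/2 + s) + 1 := by ring
    have e2 : (1:ℝ)/2 = (-(1:ℝ)/2) + 1 := by ring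
    rw [e1, e2]
    exact hg_per.intervalIntegral_add_eq _ _
  calc (∫ x in (-(1:ℝ)/2)..(1/2), ‖f (x + c) - f x‖)
      ≤ ∫ x in (-(1:ℝ)/2)..(1/2), ∫ s in (0:ℝ)..c, g (x + s) := by
        refine intervalIntegral.integral_mono_on (by norm_num)
          (hLHScont.intervalIntegrable _ _) (hRHScont.intervalIntegrable _ _) ?_
        intro x _
        exact hpt x
    _ = ∫ s in (0:ℝ)..c, ∫ x in (-(1:ℝ)/2)..(1/2), g (x + s) := hswap
    _ = ∫ s in (0:ℝ)..c, ∫ x in (-(1:ℝ)/2)..(1/2), g x := by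
        refine intervalIntegral.integral_congr fun s _ => hinner s
    _ = c * ∫ x in (-(1:ℝ)/2)..(1/2), g x := by
        rw [intervalIntegral.integral_const]
        simp [smul_eq_mul]

/-- For a smooth `1`-periodic `f : ℝ → ℂ`, the `L¹(I)` modulus of continuity is
controlled by `Var(f, I) · |sin(πh)|`, with an absolute constant:
`∫_I |f(x+h) - f(x)| dx ≲ (∫_I |f'(x)| dx) · |sin(πh)|`. -/
theorem periodic_L1_translation_bound :
    ∃ C : ℝ, 0 < C ∧ ∀ (f : ℝ → ℂ), ContDiff ℝ (⊤ : ℕ∞) f → Function.Periodic f 1 →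
      ∀ h : ℝ,
        (∫ x in (-(1:ℝ)/2)..(1/2), ‖f (x + h) - f x‖) ≤
          C * (∫ x in (-(1:ℝ)/2)..(1/2), ‖deriv f x‖) * |Real.sin (Real.pi * h)| := by
  refine ⟨1, one_pos, ?_⟩
  intro f hf hper h
  set k : ℤ := round h with hk
  set c : ℝ := h - k with hcdef
  have hcabs : |c| ≤ 1/2 := abs_sub_round h
  have hfx : ∀ x : ℝ, f (x + h) = f (x + c) := by
    intro x
    have hp := (hper.int_mul k) (x + c)
    have harg : x + h = x + c + (k:ℝ) * 1 := by rw [hcdef]; ring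
    rw [harg]; exact hp
  have hsin : |Real.sin (Real.pi * h)| = |Real.sin (Real.pi * c)| := by
    have harg : Real.pi * h = Real.pi * c + (k:ℝ) * Real.pi := by rw [hcdef]; ring
    rw [harg, Real.sin_add_int_mul_pi]
    have hone : |((-1:ℝ)) ^ k| = 1 := by
      rcases Int.even_or_odd k with he | ho
      · rw [he.neg_one_zpow]; simp
      · rw [Odd.neg_one_zpow ho]; simp
    rw [abs_mul, hone, one_mul]
  have hjordan : |c| ≤ |Real.sin (Real.pi * c)| := by
    have h1 : |Real.pi * c| ≤ Real.pi / 2 := by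
      rw [abs_mul, abs_of_pos Real.pi_pos]
      calc Real.pi * |c| ≤ Real.pi * (1/2) :=
            mul_le_mul_of_nonneg_left hcabs Real.pi_pos.le
        _ = Real.pi / 2 := by ring
    have h2 := Real.mul_abs_le_abs_sin h1
    rw [abs_mul, abs_of_pos Real.pi_pos] at h2
    have h3 : 2 / Real.pi * (Real.pi * |c|) = 2 * |c| := by
      field_simp
    rw [h3] at h2
    linarith [abs_nonneg c]
  have hVar0 : 0 ≤ ∫ x in (-(1:ℝ)/2)..(1/2), ‖deriv f x‖ :=
    intervalIntegral.integral_nonneg (by norm_num) (fun x _ => norm_nonneg _)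
  have hrw : (∫ x in (-(1:ℝ)/2)..(1/2), ‖f (x + h) - f x‖) =
      ∫ x in (-(1:ℝ)/2)..(1/2), ‖f (x + c) - f x‖ :=
    intervalIntegral.integral_congr fun x _ => by rw [hfx x]
  have hmain : (∫ x in (-(1:ℝ)/2)..(1/2), ‖f (x + h) - f x‖) ≤
      |c| * ∫ x in (-(1:ℝ)/2)..(1/2), ‖deriv f x‖ := by
    rw [hrw]
    rcases le_or_gt 0 c with hc | hc
    · rw [abs_of_nonneg hc]
      exact aux_translation_bound f hf hper c hc
    · have hd0 : (0:ℝ) ≤ -c := by linarith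
      have hφper : Function.Periodic (fun x => ‖f (x + c) - f x‖) 1 := by
        intro x
        simp only
        have h1 : x + 1 + c = (x + c) + 1 := by ring
        rw [h1, hper (x + c), hper x]
      have step1 : (∫ x in (-(1:ℝ)/2)..(1/2), ‖f (x + c) - f x‖) =
          ∫ x in (-(1:ℝ)/2 + -c)..(1/2 + -c), ‖f (x + c) - f x‖ := by
        have e2 : (1:ℝ)/2 + -c = (-(1:ℝ)/2 + -c) + 1 := by ring
        have e1 : (1:ℝ)/2 = (-(1:ℝ)/2) + 1 := by ring
        rw [e2, e1]
        exact hφper.intervalIntegral_add_eq _ _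
      have step2 : (∫ x in (-(1:ℝ)/2 + -c)..(1/2 + -c), ‖f (x + c) - f x‖) =
          ∫ y in (-(1:ℝ)/2)..(1/2), ‖f (y + -c) - f y‖ := by
        have hcr := intervalIntegral.integral_comp_add_right
          (a := -(1:ℝ)/2) (b := 1/2) (fun x => ‖f (x + c) - f x‖) (-c)
        rw [← hcr]
        refine intervalIntegral.integral_congr fun y _ => ?_
        have e : y + -c + c = y := by ring
        simp only [e, norm_sub_rev]
      rw [step1, step2, abs_of_neg hc]
      exact aux_translation_bound f hf hper (-c) hd0
  calc (∫ x in (-(1:ℝ)/2)..(1/2), ‖f (x + h) - f x‖)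
      ≤ |c| * ∫ x in (-(1:ℝ)/2)..(1/2), ‖deriv f x‖ := hmain
    _ ≤ |Real.sin (Real.pi * c)| * ∫ x in (-(1:ℝ)/2)..(1/2), ‖deriv f x‖ :=
        mul_le_mul_of_nonneg_right hjordan hVar0
    _ = 1 * (∫ x in (-(1:ℝ)/2)..(1/2), ‖deriv f x‖) * |Real.sin (Real.pi * h)| := by
        rw [hsin]; ring
end

section
/- For W ∈ (0, 1/2) and integer N ≥ 2, ‖1_{[-W,W]} - (1/N) 1_{[-W,W]} ∗ |D_N|^2‖_{L^1(I)} ≤ C (log N)/N for an absolute constant C. -/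
/-!
Let `F_N = D_N² / N` (Fejér's kernel: `D_N² = D_1 + D_3 + ⋯ + D_{2N-1}`, so `∫_I F_N = 1`) and
`G_N(u) = ∫₀ᵘ F_N`. The smoothed indicator is `G_N(x + W) - G_N(x - W)`, while on `I` the
indicator of `[-W, W)` is `⌊x + W⌋ - ⌊x - W⌋`. Hence the error is the difference of two
translates of the 1-periodic odd function `E_N(u) = G_N(u) - ⌊u⌋ - 1/2`, and it suffices to bound
`∫₀^{1/2} |E_N|`. There `|E_N| ≤ 1/2`, and `|E_N(u)| = ∫ᵤ^{1/2} F_N ≤ 1/(4Nu)` because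
`sin (π t) ≥ 2t`; together these give `∫₀^{1/2} |E_N| ≤ (1 + log N)/(4N)`.
-/

open Real

/-- The Dirichlet kernel `D_N(x) = sin(Nπx)/sin(πx)`. -/
noncomputable def dirichletKernel (N : ℕ) (x : ℝ) : ℝ :=
  Real.sin (N * Real.pi * x) / Real.sin (Real.pi * x)

open MeasureTheory intervalIntegral

lemma abs_sin_nat_mul_le (n : ℕ) (y : ℝ) : |sin (n * y)| ≤ n * |sin y| := by
  induction n with
  | zero => simp
  | succ n ih =>
    calc |sin ((n + 1 : ℕ) * y)| = |sin (n * y) * cos y + cos (n * y) * sin y| := by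
          push_cast; rw [add_mul, one_mul, sin_add]
      _ ≤ |sin (n * y)| * |cos y| + |cos (n * y)| * |sin y| := by
          rw [← abs_mul, ← abs_mul]; exact abs_add_le _ _
      _ ≤ |sin (n * y)| * 1 + 1 * |sin y| := by
          gcongr <;> exact abs_cos_le_one _
      _ ≤ (n + 1 : ℕ) * |sin y| := by push_cast; linarith

lemma sin_sq_sub_sin_sq (a b : ℝ) : sin a ^ 2 - sin b ^ 2 = sin (a + b) * sin (a - b) := by
  rw [sin_add, sin_sub]
  linear_combination sin b ^ 2 * sin_sq_add_cos_sq a - sin a ^ 2 * sin_sq_add_cos_sq b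

lemma ae_sin_pi_mul_ne_zero : ∀ᵐ x : ℝ, sin (π * x) ≠ 0 := by
  have hzeros : {x : ℝ | sin (π * x) = 0} ⊆ Set.range ((↑) : ℤ → ℝ) := fun x hx => by
    obtain ⟨n, hn⟩ := sin_eq_zero_iff.1 hx
    exact ⟨n, mul_left_cancel₀ pi_ne_zero (by linarith)⟩
  simpa [ae_iff] using measure_mono_null hzeros ((Set.countable_range _).measure_zero volume)

lemma integral_cos_two_pi_nat_mul {m : ℕ} (hm : m ≠ 0) :
    ∫ x in (-(1:ℝ)/2)..(1/2), cos (2 * m * π * x) = 0 := by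
  have hc : 2 * (m : ℝ) * π ≠ 0 := by positivity
  rw [integral_comp_mul_left (fun x => cos x) hc, integral_cos,
    show 2 * (m : ℝ) * π * (1 / 2) = m * π by ring,
    show 2 * (m : ℝ) * π * (-1 / 2) = -(m * π) by ring, sin_neg, sin_nat_mul_pi]
  simp

lemma abs_dirichletKernel_le (N : ℕ) (x : ℝ) : |dirichletKernel N x| ≤ N := by
  rw [dirichletKernel, abs_div]
  rcases eq_or_ne (sin (π * x)) 0 with h | h
  · simp [h]
  · rw [div_le_iff₀ (abs_pos.2 h), mul_assoc]
    exact abs_sin_nat_mul_le N _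

lemma measurable_dirichletKernel (N : ℕ) : Measurable (dirichletKernel N) := by
  unfold dirichletKernel; fun_prop

lemma dirichletKernel_neg (N : ℕ) (x : ℝ) : dirichletKernel N (-x) = dirichletKernel N x := by
  simp only [dirichletKernel, mul_neg, sin_neg, neg_div_neg_eq]

lemma dirichletKernel_sq_add_one (N : ℕ) (x : ℝ) :
    dirichletKernel N (x + 1) ^ 2 = dirichletKernel N x ^ 2 := by
  have hshift (n : ℕ) : sin (n * π * (x + 1)) ^ 2 = sin (n * π * x) ^ 2 := by
    rw [show n * π * (x + 1) = n * π * x + n * π by ring, sin_add_nat_mul_pi, mul_pow,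
      ← pow_mul, mul_comm n 2, pow_mul]
    simp
  simpa [dirichletKernel, div_pow] using congr_arg₂ (· / ·) (hshift N) (hshift 1)

lemma intervalIntegrable_dirichletKernel (N : ℕ) (a b : ℝ) :
    IntervalIntegrable (dirichletKernel N) volume a b :=
  intervalIntegrable_const.mono_fun' (measurable_dirichletKernel N).aestronglyMeasurable
    (ae_of_all _ fun x => abs_dirichletKernel_le N x)

lemma dirichletKernel_one {x : ℝ} (hx : sin (π * x) ≠ 0) : dirichletKernel 1 x = 1 := by
  simp [dirichletKernel, hx]

lemma dirichletKernel_odd_succ (k : ℕ) {x : ℝ} (hx : sin (π * x) ≠ 0) :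
    dirichletKernel (2 * (k + 1) + 1) x
      = dirichletKernel (2 * k + 1) x + 2 * cos (2 * (k + 1 : ℕ) * π * x) := by
  rw [dirichletKernel, dirichletKernel, div_add' _ _ _ hx, div_left_inj' hx,
    ← sub_eq_iff_eq_add', sin_sub_sin]
  push_cast
  ring_nf

lemma integral_dirichletKernel_odd (k : ℕ) :
    ∫ x in (-(1:ℝ)/2)..(1/2), dirichletKernel (2 * k + 1) x = 1 := by
  induction k with
  | zero =>
    rw [integral_congr_ae (g := fun _ => 1)
      (ae_sin_pi_mul_ne_zero.mono fun x hx _ => dirichletKernel_one hx)]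
    norm_num
  | succ k ih =>
    rw [integral_congr_ae (ae_sin_pi_mul_ne_zero.mono fun x hx _ => dirichletKernel_odd_succ k hx),
      integral_add (intervalIntegrable_dirichletKernel _ _ _)
        (by apply Continuous.intervalIntegrable; fun_prop),
      intervalIntegral.integral_const_mul, integral_cos_two_pi_nat_mul k.succ_ne_zero, ih]
    norm_num

lemma dirichletKernel_sq_eq_sum (N : ℕ) {x : ℝ} (hx : sin (π * x) ≠ 0) :
    dirichletKernel N x ^ 2 = ∑ k ∈ Finset.range N, dirichletKernel (2 * k + 1) x := by
  simp only [dirichletKernel, div_pow, ← Finset.sum_div]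
  rw [div_eq_div_iff (pow_ne_zero 2 hx) hx, sq (sin (π * x)), ← mul_assoc]
  congr 1
  induction N with
  | zero => simp
  | succ N ih =>
    rw [Finset.sum_range_succ, add_mul, ← ih, ← sub_eq_iff_eq_add', sin_sq_sub_sin_sq]
    push_cast
    ring_nf

lemma integral_dirichletKernel_sq (N : ℕ) :
    ∫ x in (-(1:ℝ)/2)..(1/2), dirichletKernel N x ^ 2 = N := by
  rw [integral_congr_ae (ae_sin_pi_mul_ne_zero.mono fun x hx _ => dirichletKernel_sq_eq_sum N hx),
    integral_finsetSum fun k _ => intervalIntegrable_dirichletKernel _ _ _]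
  simp only [integral_dirichletKernel_odd, Finset.sum_const, Finset.card_range, nsmul_eq_mul,
    mul_one]

noncomputable def fejerKernel (N : ℕ) (x : ℝ) : ℝ := dirichletKernel N x ^ 2 / N

lemma fejerKernel_nonneg (N : ℕ) (x : ℝ) : 0 ≤ fejerKernel N x := by
  unfold fejerKernel; positivity

lemma fejerKernel_le (N : ℕ) (x : ℝ) : fejerKernel N x ≤ N := by
  have hsq : dirichletKernel N x ^ 2 ≤ (N : ℝ) ^ 2 :=
    sq_le_sq.2 ((abs_dirichletKernel_le N x).trans (le_abs_self _))
  calc fejerKernel N x ≤ (N : ℝ) ^ 2 / N := by unfold fejerKernel; gcongr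
    _ = N := by rw [sq, mul_self_div_self]

lemma intervalIntegrable_fejerKernel (N : ℕ) (a b : ℝ) :
    IntervalIntegrable (fejerKernel N) volume a b :=
  intervalIntegrable_const.mono_fun'
    (((measurable_dirichletKernel N).pow_const 2).div_const _).aestronglyMeasurable
    (ae_of_all _ fun x =>
      (Real.norm_of_nonneg (fejerKernel_nonneg N x)).trans_le (fejerKernel_le N x))

lemma fejerKernel_neg (N : ℕ) (x : ℝ) : fejerKernel N (-x) = fejerKernel N x := by
  simp only [fejerKernel, dirichletKernel_neg]

lemma fejerKernel_periodic (N : ℕ) : Function.Periodic (fejerKernel N) 1 := fun x => by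
  simp only [fejerKernel, dirichletKernel_sq_add_one]

lemma integral_fejerKernel {N : ℕ} (hN : N ≠ 0) :
    ∫ x in (-(1:ℝ)/2)..(1/2), fejerKernel N x = 1 := by
  unfold fejerKernel
  rw [intervalIntegral.integral_div, integral_dirichletKernel_sq,
    div_self (Nat.cast_ne_zero.2 hN)]

lemma fejerKernel_le_inv_sq (N : ℕ) {t : ℝ} (ht : 0 < t) (ht' : t ≤ 1 / 2) :
    fejerKernel N t ≤ (4 * N * t ^ 2)⁻¹ := by
  have hsin : 2 * t ≤ sin (π * t) := by
    have h := mul_le_sin (x := π * t) (by positivity) (by nlinarith [pi_pos])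
    rwa [← mul_assoc, div_mul_cancel₀ _ pi_ne_zero] at h
  have hD : dirichletKernel N t ^ 2 ≤ ((2 * t) ^ 2)⁻¹ := by
    rw [dirichletKernel, div_pow, div_eq_mul_inv]
    calc sin (N * π * t) ^ 2 * (sin (π * t) ^ 2)⁻¹ ≤ 1 * ((2 * t) ^ 2)⁻¹ := by
          gcongr
          · exact sin_sq_le_one _
      _ = ((2 * t) ^ 2)⁻¹ := one_mul _
  calc fejerKernel N t ≤ ((2 * t) ^ 2)⁻¹ / N := by unfold fejerKernel; gcongr
    _ = (4 * N * t ^ 2)⁻¹ := by rw [div_eq_mul_inv, ← mul_inv]; ring_nf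

noncomputable def fejerPrimitive (N : ℕ) (u : ℝ) : ℝ := ∫ t in (0:ℝ)..u, fejerKernel N t

lemma fejerPrimitive_sub (N : ℕ) (a b : ℝ) :
    fejerPrimitive N b - fejerPrimitive N a = ∫ t in a..b, fejerKernel N t :=
  integral_interval_sub_left (intervalIntegrable_fejerKernel N _ _)
    (intervalIntegrable_fejerKernel N _ _)

lemma continuous_fejerPrimitive (N : ℕ) : Continuous (fejerPrimitive N) :=
  continuous_primitive (intervalIntegrable_fejerKernel N) 0

lemma monotone_fejerPrimitive (N : ℕ) : Monotone (fejerPrimitive N) := fun a b hab => by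
  rw [← sub_nonneg, fejerPrimitive_sub]
  exact integral_nonneg hab fun t _ => fejerKernel_nonneg N t

lemma fejerPrimitive_zero (N : ℕ) : fejerPrimitive N 0 = 0 := integral_same

lemma fejerPrimitive_neg (N : ℕ) (u : ℝ) : fejerPrimitive N (-u) = -fejerPrimitive N u := by
  have h := integral_comp_neg (a := 0) (b := u) (fejerKernel N)
  simp only [fejerKernel_neg, neg_zero] at h
  rw [fejerPrimitive, fejerPrimitive, integral_symm, h]

lemma fejerPrimitive_add_one {N : ℕ} (hN : N ≠ 0) (u : ℝ) :
    fejerPrimitive N (u + 1) = fejerPrimitive N u + 1 := by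
  rw [← sub_eq_iff_eq_add', fejerPrimitive_sub,
    (fejerKernel_periodic N).intervalIntegral_add_eq u (-(1:ℝ)/2),
    show -(1:ℝ)/2 + 1 = 1/2 by norm_num, integral_fejerKernel hN]

lemma fejerPrimitive_half {N : ℕ} (hN : N ≠ 0) : fejerPrimitive N (1 / 2) = 1 / 2 := by
  have h := fejerPrimitive_sub N (-(1:ℝ)/2) (1/2)
  rw [integral_fejerKernel hN, neg_div, fejerPrimitive_neg] at h
  linarith

noncomputable def fejerDiscrepancy (N : ℕ) (u : ℝ) : ℝ := fejerPrimitive N u - ⌊u⌋ - 1 / 2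

lemma fejerDiscrepancy_periodic {N : ℕ} (hN : N ≠ 0) : Function.Periodic (fejerDiscrepancy N) 1 :=
  fun u => by
    simp only [fejerDiscrepancy, fejerPrimitive_add_one hN, Int.floor_add_one, Int.cast_add,
      Int.cast_one]
    ring

lemma measurable_fejerDiscrepancy (N : ℕ) : Measurable (fejerDiscrepancy N) :=
  (((continuous_fejerPrimitive N).measurable.sub
    (measurable_from_top.comp Int.measurable_floor)).sub measurable_const)

lemma fejerDiscrepancy_of_mem_Ico (N : ℕ) {u : ℝ} (hu : u ∈ Set.Ico 0 1) :
    fejerDiscrepancy N u = fejerPrimitive N u - 1 / 2 := by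
  simp [fejerDiscrepancy, Int.floor_eq_zero_iff.2 hu]

lemma fejerDiscrepancy_neg (N : ℕ) {u : ℝ} (hu : u ∈ Set.Ioo 0 1) :
    fejerDiscrepancy N (-u) = -fejerDiscrepancy N u := by
  have hfloor : ⌊-u⌋ = -1 := Int.floor_eq_iff.2 ⟨by push_cast; linarith [hu.2], by
    push_cast; linarith [hu.1]⟩
  rw [fejerDiscrepancy, fejerPrimitive_neg, hfloor,
    fejerDiscrepancy_of_mem_Ico N (Set.Ioo_subset_Ico_self hu)]
  push_cast; ring

lemma abs_fejerDiscrepancy_le {N : ℕ} (hN : N ≠ 0) (u : ℝ) : |fejerDiscrepancy N u| ≤ 1 / 2 := by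
  have hfract : Int.fract u ∈ Set.Ico 0 1 := ⟨Int.fract_nonneg u, Int.fract_lt_one u⟩
  have hG0 := monotone_fejerPrimitive N hfract.1
  have hG1 := monotone_fejerPrimitive N hfract.2.le
  rw [fejerPrimitive_zero] at hG0
  rw [show (1:ℝ) = 0 + 1 by norm_num, fejerPrimitive_add_one hN, fejerPrimitive_zero] at hG1
  rw [← (fejerDiscrepancy_periodic hN).sub_int_mul_eq ⌊u⌋, mul_one, ← Int.fract,
    fejerDiscrepancy_of_mem_Ico N hfract, abs_le]
  constructor <;> linarith

lemma abs_fejerDiscrepancy_le_inv {N : ℕ} (hN : N ≠ 0) {u : ℝ} (hu : 0 < u) (hu' : u ≤ 1 / 2) :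
    |fejerDiscrepancy N u| ≤ (4 * N * u)⁻¹ := by
  have h0 : (0 : ℝ) ∉ Set.uIcc u (1 / 2) := by
    rw [Set.uIcc_of_le hu']; exact fun h => hu.not_ge h.1
  have habs : |fejerDiscrepancy N u| = ∫ t in u..(1/2), fejerKernel N t := by
    rw [fejerDiscrepancy_of_mem_Ico N ⟨hu.le, by linarith⟩, ← fejerPrimitive_sub,
      fejerPrimitive_half hN, abs_sub_comm, abs_of_nonneg]
    linarith [monotone_fejerPrimitive N hu', fejerPrimitive_half hN]
  have htail : ∫ t in u..(1/2), fejerKernel N t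
      ≤ ∫ t in u..(1/2), (4 * (N : ℝ))⁻¹ * t ^ (-2 : ℤ) := by
    refine integral_mono_on hu' (intervalIntegrable_fejerKernel N _ _)
      ((continuousOn_const.mul (continuousOn_id.zpow₀ _ fun t ht =>
        Or.inl (ne_of_mem_of_not_mem ht h0))).intervalIntegrable) fun t ht => ?_
    rw [zpow_neg, zpow_two, ← mul_inv, ← sq]
    exact fejerKernel_le_inv_sq N (hu.trans_le ht.1) ht.2
  have hprimitive : ∫ t in u..(1/2), t ^ (-2 : ℤ) = u⁻¹ - 2 := by
    rw [integral_zpow (Or.inr ⟨by norm_num, h0⟩)]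
    norm_num
    ring
  calc |fejerDiscrepancy N u| ≤ ∫ t in u..(1/2), (4 * (N : ℝ))⁻¹ * t ^ (-2 : ℤ) := habs ▸ htail
    _ = (4 * (N : ℝ))⁻¹ * (u⁻¹ - 2) := by rw [intervalIntegral.integral_const_mul, hprimitive]
    _ ≤ (4 * (N : ℝ))⁻¹ * u⁻¹ := by gcongr; linarith
    _ = (4 * N * u)⁻¹ := (mul_inv _ _).symm

lemma intervalIntegrable_fejerDiscrepancy_comp_add {N : ℕ} (hN : N ≠ 0) (c a b : ℝ) :
    IntervalIntegrable (fun x => fejerDiscrepancy N (x + c)) volume a b :=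
  intervalIntegrable_const.mono_fun'
    ((measurable_fejerDiscrepancy N).comp (measurable_add_const c)).aestronglyMeasurable
    (ae_of_all _ fun x => abs_fejerDiscrepancy_le hN (x + c))

lemma intervalIntegrable_abs_fejerDiscrepancy {N : ℕ} (hN : N ≠ 0) (a b : ℝ) :
    IntervalIntegrable (fun x => |fejerDiscrepancy N x|) volume a b := by
  simpa using (intervalIntegrable_fejerDiscrepancy_comp_add hN 0 a b).abs

lemma integral_abs_fejerDiscrepancy_comp_add {N : ℕ} (hN : N ≠ 0) (c : ℝ) :
    ∫ x in (-(1:ℝ)/2)..(1/2), |fejerDiscrepancy N (x + c)|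
      = ∫ x in (-(1:ℝ)/2)..(1/2), |fejerDiscrepancy N x| := by
  have hper : Function.Periodic (fun x => |fejerDiscrepancy N x|) 1 := fun x => by
    simp only [fejerDiscrepancy_periodic hN x]
  have h := hper.intervalIntegral_add_eq (-(1:ℝ)/2 + c) (-(1:ℝ)/2)
  rw [integral_comp_add_right (fun x => |fejerDiscrepancy N x|)]
  convert h using 2 <;> ring

lemma integral_abs_fejerDiscrepancy_eq_two_mul {N : ℕ} (hN : N ≠ 0) :
    ∫ x in (-(1:ℝ)/2)..(1/2), |fejerDiscrepancy N x|
      = 2 * ∫ x in (0:ℝ)..(1/2), |fejerDiscrepancy N x| := by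
  have hleft : ∫ x in (-(1:ℝ)/2)..0, |fejerDiscrepancy N x|
      = ∫ x in (0:ℝ)..(1/2), |fejerDiscrepancy N x| := by
    rw [show -(1:ℝ)/2 = -(1/2) by ring, ← neg_zero, ← integral_comp_neg, neg_zero]
    refine integral_congr_ae (ae_of_all _ fun x hx => ?_)
    rw [Set.uIoc_of_le (by norm_num)] at hx
    simp only [fejerDiscrepancy_neg N ⟨hx.1, by linarith [hx.2]⟩, abs_neg]
  rw [← integral_add_adjacent_intervals (b := 0) (intervalIntegrable_abs_fejerDiscrepancy hN _ _)
    (intervalIntegrable_abs_fejerDiscrepancy hN _ _), hleft, two_mul]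

/-- Split at `u = 1/(2N)`, where the bounds `1/2` and `1/(4Nu)` on `|E_N(u)|` cross. -/
lemma integral_abs_fejerDiscrepancy_le {N : ℕ} (hN : N ≠ 0) :
    ∫ x in (0:ℝ)..(1/2), |fejerDiscrepancy N x| ≤ (1 + log N) / (4 * N) := by
  have hN1 : (1 : ℝ) ≤ N := Nat.one_le_cast.2 (Nat.one_le_iff_ne_zero.2 hN)
  set a : ℝ := (2 * N)⁻¹ with ha
  have ha0 : 0 < a := by positivity
  have ha2 : a ≤ 1 / 2 := by rw [ha, one_div]; gcongr; linarith
  have hnear : ∫ x in (0:ℝ)..a, |fejerDiscrepancy N x| ≤ ∫ _ in (0:ℝ)..a, (1 / 2 : ℝ) :=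
    integral_mono_on ha0.le (intervalIntegrable_abs_fejerDiscrepancy hN _ _)
      intervalIntegrable_const      fun x _ => abs_fejerDiscrepancy_le hN x
  have hfar : ∫ x in a..(1/2), |fejerDiscrepancy N x| ≤ ∫ x in a..(1/2), (4 * (N : ℝ))⁻¹ * x⁻¹ := by
    refine integral_mono_on ha2 (intervalIntegrable_abs_fejerDiscrepancy hN _ _)
      ((continuousOn_const.mul (continuousOn_inv₀.mono fun x hx => ?_)).intervalIntegrable)
      fun x hx => ?_
    · rw [Set.uIcc_of_le ha2] at hx; exact (ha0.trans_le hx.1).ne'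
    · rw [← mul_inv]
      exact abs_fejerDiscrepancy_le_inv hN (ha0.trans_le hx.1) hx.2
  have hlog : 1 / 2 / a = N := by rw [ha]; field_simp
  calc ∫ x in (0:ℝ)..(1/2), |fejerDiscrepancy N x|
      = (∫ x in (0:ℝ)..a, |fejerDiscrepancy N x|) + ∫ x in a..(1/2), |fejerDiscrepancy N x| :=
        (integral_add_adjacent_intervals (intervalIntegrable_abs_fejerDiscrepancy hN _ _)
          (intervalIntegrable_abs_fejerDiscrepancy hN _ _)).symm
    _ ≤ (∫ _ in (0:ℝ)..a, (1 / 2 : ℝ)) + ∫ x in a..(1/2), (4 * (N : ℝ))⁻¹ * x⁻¹ :=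
        add_le_add hnear hfar
    _ = a / 2 + (4 * (N : ℝ))⁻¹ * log N := by
        rw [intervalIntegral.integral_const, intervalIntegral.integral_const_mul,
          integral_inv_of_pos ha0 (by norm_num), hlog, smul_eq_mul]
        ring
    _ = (1 + log N) / (4 * N) := by rw [ha]; field_simp; ring

lemma integral_abs_fejerDiscrepancy_sub_le {N : ℕ} (hN : N ≠ 0) (b c : ℝ) :
    ∫ x in (-(1:ℝ)/2)..(1/2), |fejerDiscrepancy N (x + b) - fejerDiscrepancy N (x + c)|
      ≤ (1 + log N) / N := by
  have hint (d : ℝ) := intervalIntegrable_fejerDiscrepancy_comp_add hN d (-(1:ℝ)/2) (1/2)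
  calc _ ≤ ∫ x in (-(1:ℝ)/2)..(1/2),
          (|fejerDiscrepancy N (x + b)| + |fejerDiscrepancy N (x + c)|) :=
        integral_mono_on (by norm_num) (hint b |>.sub (hint c)).abs ((hint b).abs.add (hint c).abs)
          fun x _ => abs_sub _ _
    _ = 4 * ∫ x in (0:ℝ)..(1/2), |fejerDiscrepancy N x| := by
        rw [integral_add (hint b).abs (hint c).abs,
          integral_abs_fejerDiscrepancy_comp_add hN, integral_abs_fejerDiscrepancy_comp_add hN,
          integral_abs_fejerDiscrepancy_eq_two_mul hN]
        ring
    _ ≤ 4 * ((1 + log N) / (4 * N)) := by gcongr; exact integral_abs_fejerDiscrepancy_le hN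
    _ = (1 + log N) / N := by field_simp

/-- `⌊x + W⌋ - ⌊x - W⌋` counts the integers in `(x - W, x + W]`, and for `|x| ≤ 1/2` only `0`
can lie there. -/
lemma indicator_Ico_eq_floor_sub_floor {W x : ℝ} (hW : W ∈ Set.Ioo 0 (1 / 2))
    (hx : x ∈ Set.Icc (-(1:ℝ)/2) (1/2)) :
    Set.indicator (Set.Ico (-W) W) (fun _ => (1:ℝ)) x = ⌊x + W⌋ - ⌊x - W⌋ := by
  obtain ⟨hW0, hW1⟩ := hW
  obtain ⟨hx0, hx1⟩ := hx
  have floor_eq (y : ℝ) (n : ℤ) (h0 : n ≤ y) (h1 : y < n + 1) : (⌊y⌋ : ℝ) = n := by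
    rw [Int.floor_eq_iff.2 ⟨h0, h1⟩]
  by_cases hmem : x ∈ Set.Ico (-W) W
  · rw [Set.indicator_of_mem hmem, floor_eq (x + W) 0 (by push_cast; linarith [hmem.1])
      (by push_cast; linarith [hmem.2]),
      floor_eq (x - W) (-1) (by push_cast; linarith) (by push_cast; linarith [hmem.2])]
    norm_num
  · rw [Set.indicator_of_notMem hmem, eq_comm, sub_eq_zero]
    simp only [Set.mem_Ico, not_and_or, not_le, not_lt] at hmem
    rcases hmem with h | h
    · rw [floor_eq (x + W) (-1) (by push_cast; linarith) (by push_cast; linarith),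
        floor_eq (x - W) (-1) (by push_cast; linarith) (by push_cast; linarith)]
    · rw [floor_eq (x + W) 0 (by push_cast; linarith) (by push_cast; linarith),
        floor_eq (x - W) 0 (by push_cast; linarith) (by push_cast; linarith)]

lemma one_div_mul_integral_dirichletKernel_sq_sub (N : ℕ) (x a b : ℝ) :
    1 / (N : ℝ) * ∫ y in a..b, dirichletKernel N (x - y) ^ 2
      = fejerPrimitive N (x - a) - fejerPrimitive N (x - b) := by
  rw [fejerPrimitive_sub, ← integral_comp_sub_left, one_div_mul_eq_div,
    ← intervalIntegral.integral_div]
  rfl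

/-- For `W ∈ (0,1/2)` and `N ≥ 2`:
`‖1_{[-W,W]} - (1/N) 1_{[-W,W]} ∗ |D_N|²‖_{L¹(I)} ≤ C (log N)/N`,
where `(1_{[-W,W]} ∗ |D_N|²)(x) = ∫_{-W}^{W} |D_N(x-y)|² dy`. -/
theorem indicator_approximation_bound :
    ∃ C : ℝ, 0 < C ∧ ∀ (N : ℕ), 2 ≤ N → ∀ W : ℝ, W ∈ Set.Ioo (0:ℝ) (1/2) →
      (∫ x in (-(1:ℝ)/2)..(1/2),
          |Set.indicator (Set.Icc (-W) W) (fun _ => (1:ℝ)) x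
            - (1 / (N : ℝ)) * ∫ y in (-W)..W, (dirichletKernel N (x - y))^2|)
        ≤ C * Real.log N / N := by
  refine ⟨3, by norm_num, fun N hN W hW => ?_⟩
  have hsplit : ∫ x in (-(1:ℝ)/2)..(1/2), |Set.indicator (Set.Icc (-W) W) (fun _ => (1:ℝ)) x
        - (1 / (N : ℝ)) * ∫ y in (-W)..W, (dirichletKernel N (x - y))^2|
      = ∫ x in (-(1:ℝ)/2)..(1/2),
          |fejerDiscrepancy N (x + -W) - fejerDiscrepancy N (x + W)| := by
    refine integral_congr_ae ?_
    filter_upwards [indicator_ae_eq_of_ae_eq_set (f := fun _ => (1:ℝ))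
      (Ico_ae_eq_Icc (μ := volume) (a := -W) (b := W)).symm] with x hind hx
    rw [Set.uIoc_of_le (by norm_num)] at hx
    rw [hind, indicator_Ico_eq_floor_sub_floor hW ⟨hx.1.le, hx.2⟩,
      one_div_mul_integral_dirichletKernel_sq_sub, fejerDiscrepancy, fejerDiscrepancy,
      sub_neg_eq_add, ← sub_eq_add_neg]
    congr 1
    ring
  have hlog : (1 : ℝ) ≤ 2 * log N := by
    linarith [log_two_gt_d9, log_le_log two_pos (Nat.ofNat_le_cast.2 hN)]
  rw [hsplit]
  refine (integral_abs_fejerDiscrepancy_sub_le (by omega) (-W) W).trans ?_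
  gcongr
  linarith
end

section
/- Let λ_0 ≥ … ≥ λ_{N-1} be the eigenvalues of H_W^N, lying in [0,1], with ∑_{k=0}^{N-1} λ_k = 2NW and ∑_{k=0}^{N-1} λ_k(1-λ_k) ≤ C log N. Set K = ⌊2NW⌋ with K ≥ 1. Then |K - ∑_{k=0}^{K-1} λ_k| ≤ C' (log N + 1) for an absolute constant C' depending only on C; equivalently |1 - (1/K)∑_{k=0}^{K-1} λ_k| ≲ (log N)/K. -/
/-!
On `[0, 1]` one has `min λ (1 - λ) ≤ 2 λ (1 - λ)`. If `λ_k ≥ 1/2` for all `k < K`, this bounds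
the deficit `∑_{k<K} (1 - λ_k)` by twice the variance `∑ λ_k (1 - λ_k)`. Otherwise some
`λ_k < 1/2` with `k < K`, so by monotonicity `λ_k ≤ 1/2` for `k ≥ K`, and the same inequality
bounds the tail mass `∑_{K ≤ k < N} λ_k`, which dominates the deficit because `K ≤ ∑ λ_k`.
-/

open Finset

section
variable {ι : Type*} {f : ι → ℝ} {s t : Finset ι}

theorem sum_one_sub_le_two_mul_sum_mul_one_sub (hf : ∀ i ∈ s, f i ∈ Set.Icc (1 / 2) 1) :
    ∑ i ∈ s, (1 - f i) ≤ 2 * ∑ i ∈ s, f i * (1 - f i) := by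
  rw [mul_sum]
  refine sum_le_sum fun i hi => ?_
  obtain ⟨h0, h1⟩ := hf i hi
  nlinarith

theorem sum_le_two_mul_sum_mul_one_sub (hf : ∀ i ∈ s, f i ∈ Set.Icc 0 (1 / 2)) :
    ∑ i ∈ s, f i ≤ 2 * ∑ i ∈ s, f i * (1 - f i) := by
  rw [mul_sum]
  refine sum_le_sum fun i hi => ?_
  obtain ⟨h0, h1⟩ := hf i hi
  nlinarith

theorem sum_mul_one_sub_le_of_subset (hst : s ⊆ t) (hf : ∀ i ∈ t, f i ∈ Set.Icc 0 1) :
    ∑ i ∈ s, f i * (1 - f i) ≤ ∑ i ∈ t, f i * (1 - f i) :=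
  sum_le_sum_of_subset_of_nonneg hst fun i hi _ =>
    mul_nonneg (hf i hi).1 (sub_nonneg.2 (hf i hi).2)

end

theorem natCast_sub_sum_range_le_two_mul_sum_mul_one_sub {lam : ℕ → ℝ} {K N : ℕ}
    (hbd : ∀ k ∈ range N, lam k ∈ Set.Icc 0 1) (hanti : AntitoneOn lam (Set.Iio N))
    (hKN : K ≤ N) (hK : (K : ℝ) ≤ ∑ k ∈ range N, lam k) :
    (K : ℝ) - ∑ k ∈ range K, lam k ≤ 2 * ∑ k ∈ range N, lam k * (1 - lam k) := by
  by_cases hhead : ∀ k ∈ range K, 1 / 2 ≤ lam k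
  · have hdeficit : (K : ℝ) - ∑ k ∈ range K, lam k = ∑ k ∈ range K, (1 - lam k) := by
      simp [sum_sub_distrib]
    rw [hdeficit]
    have hhead_large : ∀ k ∈ range K, lam k ∈ Set.Icc (1 / 2) 1 :=
      fun k hk => ⟨hhead k hk, (hbd k (range_subset_range.2 hKN hk)).2⟩
    linarith [sum_one_sub_le_two_mul_sum_mul_one_sub hhead_large,
      sum_mul_one_sub_le_of_subset (range_subset_range.2 hKN) hbd]
  · push Not at hhead
    obtain ⟨k₀, hk₀K, hk₀⟩ := hhead
    have htail_small : ∀ k ∈ Ico K N, lam k ∈ Set.Icc 0 (1 / 2) := by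
      intro k hk
      obtain ⟨hKk, hkN⟩ := mem_Ico.1 hk
      have hk₀k : k₀ ≤ k := (mem_range.1 hk₀K).le.trans hKk
      exact ⟨(hbd k (mem_range.2 hkN)).1,
        (hanti (hk₀k.trans_lt hkN) hkN hk₀k).trans hk₀.le⟩
    have htail_sub : Ico K N ⊆ range N := fun k hk => mem_range.2 (mem_Ico.1 hk).2
    linarith [sum_range_add_sum_Ico lam hKN, sum_le_two_mul_sum_mul_one_sub htail_small,
      sum_mul_one_sub_le_of_subset htail_sub hbd]

/-- Purely finite-dimensional eigenvalue-profile statement: if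
`1 ≥ λ_0 ≥ … ≥ λ_{N-1} ≥ 0`, `∑_{k<N} λ_k = 2NW`, and
`∑_{k<N} λ_k(1-λ_k) ≤ C log N`, then with `K = ⌊2NW⌋ ≥ 1` one has
`|K - ∑_{k<K} λ_k| ≤ C' (log N + 1)` with `C'` depending only on `C`. -/
theorem partial_eigenvalue_sum_bound (C : ℝ) (hC : 0 < C) :
    ∃ C' : ℝ, 0 < C' ∧ ∀ (N : ℕ), 2 ≤ N → ∀ W : ℝ, W ∈ Set.Ioo (0:ℝ) (1/2) →
      ∀ lam : ℕ → ℝ,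
      (∀ k, k < N → 0 ≤ lam k ∧ lam k ≤ 1) →
      (∀ j k, j ≤ k → k < N → lam k ≤ lam j) →
      (∑ k ∈ Finset.range N, lam k) = 2 * N * W →
      (∑ k ∈ Finset.range N, lam k * (1 - lam k)) ≤ C * Real.log N →
      ∀ K : ℕ, K = ⌊2 * (N : ℝ) * W⌋₊ → 1 ≤ K →
        |(K : ℝ) - ∑ k ∈ Finset.range K, lam k| ≤ C' * (Real.log N + 1) := by
  refine ⟨2 * C, by positivity, ?_⟩
  rintro N - W ⟨hW0, hW1⟩ lam hbd hmono hsum hvar K hK -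
  have hKW : (K : ℝ) ≤ 2 * N * W := hK ▸ Nat.floor_le (by positivity)
  have hKN : K ≤ N := by exact_mod_cast hKW.trans (by nlinarith : 2 * (N : ℝ) * W ≤ N)
  have hbd' : ∀ k ∈ range N, lam k ∈ Set.Icc 0 1 := fun k hk => hbd k (mem_range.1 hk)
  have hhead_le : ∑ k ∈ range K, lam k ≤ K := by
    simpa using sum_le_sum fun k hk => (hbd' k (range_subset_range.2 hKN hk)).2
  have hdeficit := natCast_sub_sum_range_le_two_mul_sum_mul_one_sub hbd'
    (fun j _ k hk hjk => hmono j k hjk hk) hKN (hsum ▸ hKW)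
  rw [abs_of_nonneg (sub_nonneg.2 hhead_le)]
  linarith
end
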